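/- arXiv:1409.5843 — 6 statements merged into one kernel-verified Lean document; each statement's English description precedes it below -/
import Mathlib

section
/- For every integer d ≥ 5 there exists a unique t* ∈ (0, (d−1)/2) with Γ(t*) = Γ(d−1−t*) and t* ≠ (d−1)/2; equivalently, there is a unique τ* ∈ (1, d) with Γ((d−τ*)/2) = Γ((d+τ*)/2 − 1). -/
/-!
Write `N = d - 1`. Since `Γ ≤ 1 < Γ (N - t)` on `[1, 2]` and `Γ` increases on `[2, ∞)`, every
solution of `Γ t = Γ (N - t)` in `(0, N / 2)` lies in `(0, 1)`, and then `Γ (t + 1) = t Γ (N - t)`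
forces `t ≤ 1 / Γ (N - 1)`. On that interval `log Γ t - log Γ (N - t)` is strictly decreasing:
writing `log Γ t = log Γ (t + 1) - log t`, the term `-log t` has slope at most `-Γ (N - 1)`, while
by log-convexity the remaining terms have slope at most `log (3N/2) < Γ (N - 1)`. Existence follows
from the intermediate value theorem, as `Γ t ≥ 1 / (2t)` blows up at `0` while `Γ 1 < Γ (N - 1)`.
The statement about `τ` is the substitution `τ = d - 2t`.
-/

open Real Set

namespace Real

lemma continuousOn_Gamma_Ioi : ContinuousOn Gamma (Ioi 0) := fun x hx =>
  (differentiableAt_Gamma fun m hm => by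
    have : (0 : ℝ) ≤ m := m.cast_nonneg
    linarith [mem_Ioi.mp hx]).continuousAt.continuousWithinAt

lemma one_lt_Gamma {x : ℝ} (hx : 2 < x) : 1 < Gamma x :=
  Gamma_two ▸ Gamma_strictMonoOn_Ici self_mem_Ici (mem_Ici.mpr hx.le) hx

lemma one_le_Gamma {x : ℝ} (hx : 2 ≤ x) : 1 ≤ Gamma x := by
  rcases hx.eq_or_lt with rfl | hx
  · exact Gamma_two.ge
  · exact (one_lt_Gamma hx).le

lemma Gamma_le_one {x : ℝ} (h1 : 1 ≤ x) (h2 : x ≤ 2) : Gamma x ≤ 1 := by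
  have h := convexOn_Gamma.2 (mem_Ioi.mpr one_pos) (mem_Ioi.mpr two_pos)
    (sub_nonneg.mpr h2) (sub_nonneg.mpr h1) (by ring : (2 - x) + (x - 1) = 1)
  simp only [smul_eq_mul, Gamma_one, Gamma_two] at h
  rw [show (2 - x) * 1 + (x - 1) * 2 = x by ring] at h
  linarith

lemma sub_one_le_Gamma {x : ℝ} (hx : 3 ≤ x) : x - 1 ≤ Gamma x := by
  have h := Gamma_add_one (show x - 1 ≠ 0 by linarith)
  rw [sub_add_cancel] at h
  rw [h]
  exact le_mul_of_one_le_right (by linarith) (one_le_Gamma (by linarith))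

lemma inv_two_mul_le_Gamma {t : ℝ} (ht0 : 0 < t) (ht1 : t ≤ 1) : (2 * t)⁻¹ ≤ Gamma t := by
  have h : Gamma (t + 1 + 1) = (t + 1) * (t * Gamma t) := by
    rw [Gamma_add_one (by linarith), Gamma_add_one ht0.ne']
  have h1 : 1 ≤ (t + 1) * (t * Gamma t) := h ▸ one_le_Gamma (by linarith)
  have hpos := Gamma_pos_of_pos ht0
  rw [inv_le_iff_one_le_mul₀ (by positivity)]
  nlinarith

/-- The slope of `log ∘ Gamma` on `[a, b]` is at most its slope `log b` on `[b, b + 1]`. -/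
lemma log_Gamma_sub_log_Gamma_le {a b : ℝ} (ha : 0 < a) (hab : a < b) :
    log (Gamma b) - log (Gamma a) ≤ (b - a) * log b := by
  have hb : 0 < b := ha.trans hab
  have h := convexOn_log_Gamma.slope_mono_adjacent (mem_Ioi.mpr ha)
    (mem_Ioi.mpr (by linarith : 0 < b + 1)) hab (lt_add_one b)
  simp only [Function.comp_apply, Gamma_add_one hb.ne',
    log_mul hb.ne' (Gamma_pos_of_pos hb).ne', add_sub_cancel_left, div_one,
    add_sub_cancel_right] at h
  rwa [div_le_iff₀ (sub_pos.mpr hab), mul_comm] at h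

lemma log_three_halves_mul_lt_Gamma_sub_one {N : ℝ} (hN : 4 ≤ N) :
    log (3 / 2 * N) < Gamma (N - 1) := by
  have hlog6 : log 6 < 2 := by
    rw [log_lt_iff_lt_exp (by norm_num), show (2 : ℝ) = 1 + 1 by norm_num, exp_add]
    nlinarith [exp_one_gt_d9]
  have hlogN : log (N / 4) ≤ N / 4 - 1 := log_le_sub_one_of_pos (by linarith)
  have hsplit : log (3 / 2 * N) = log 6 + log (N / 4) := by
    rw [← log_mul (by norm_num) (by linarith)]
    ring_nf
  linarith [sub_one_le_Gamma (by linarith : 3 ≤ N - 1)]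

section

variable {N : ℝ}

lemma lt_one_of_Gamma_eq_Gamma_sub (hN : 4 ≤ N) {t : ℝ} (htN : t < N / 2)
    (h : Gamma t = Gamma (N - t)) : t < 1 := by
  by_contra! ht1
  rcases le_or_gt t 2 with ht2 | ht2
  · linarith [Gamma_le_one ht1 ht2, one_lt_Gamma (by linarith : 2 < N - t)]
  · linarith [Gamma_strictMonoOn_Ici (mem_Ici.mpr ht2.le) (mem_Ici.mpr (by linarith))
      (by linarith : t < N - t)]

lemma le_inv_Gamma_of_Gamma_eq_Gamma_sub (hN : 3 ≤ N) {t : ℝ} (ht0 : 0 < t) (ht1 : t < 1)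
    (h : Gamma t = Gamma (N - t)) : t ≤ (Gamma (N - 1))⁻¹ := by
  have hGt1 : Gamma (t + 1) = t * Gamma (N - t) := by rw [Gamma_add_one ht0.ne', h]
  have hmono : Gamma (N - 1) ≤ Gamma (N - t) :=
    Gamma_strictMonoOn_Ici.monotoneOn (mem_Ici.mpr (by linarith)) (mem_Ici.mpr (by linarith))
      (by linarith)
  have hle : Gamma (t + 1) ≤ 1 := Gamma_le_one (by linarith) (by linarith)
  rw [le_inv_comm₀ ht0 (Gamma_pos_of_pos (by linarith)), ← one_div, le_div_iff₀ ht0]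
  nlinarith [Gamma_pos_of_pos (show 0 < N - t by linarith)]

lemma strictAntiOn_log_Gamma_sub_log_Gamma_sub (hN : 4 ≤ N) :
    StrictAntiOn (fun t => log (Gamma t) - log (Gamma (N - t))) (Ioc 0 (Gamma (N - 1))⁻¹) := by
  rintro s ⟨hs0, -⟩ t ⟨ht0, htG⟩ hst
  set G := Gamma (N - 1)
  have hG : 2 ≤ G := by linarith [sub_one_le_Gamma (by linarith : 3 ≤ N - 1)]
  have ht : t ≤ 1 / 2 := htG.trans (by rw [one_div]; exact inv_anti₀ two_pos hG)
  have hlog : (t - s) * G ≤ log t - log s := by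
    have h := one_sub_inv_le_log_of_pos (div_pos ht0 hs0)
    rw [log_div ht0.ne' hs0.ne', inv_div, one_sub_div ht0.ne'] at h
    have htG' : G * t ≤ 1 := by
      simpa [mul_inv_cancel₀ (by linarith : G ≠ 0)] using
        mul_le_mul_of_nonneg_left htG (by linarith : 0 ≤ G)
    refine le_trans ?_ h
    rw [le_div_iff₀ ht0]
    nlinarith
  have hslope₁ : log (Gamma (t + 1)) - log (Gamma (s + 1)) ≤ (t - s) * log (3 / 2) := by
    have h := log_Gamma_sub_log_Gamma_le (by linarith : 0 < s + 1) (by linarith : s + 1 < t + 1)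
    have hlt : log (t + 1) ≤ log (3 / 2) := log_le_log (by linarith) (by linarith)
    rw [add_sub_add_right_eq_sub] at h
    nlinarith
  have hslope₂ : log (Gamma (N - s)) - log (Gamma (N - t)) ≤ (t - s) * log N := by
    have h := log_Gamma_sub_log_Gamma_le (by linarith : 0 < N - t) (by linarith : N - t < N - s)
    have hlt : log (N - s) ≤ log N := log_le_log (by linarith) (by linarith)
    rw [sub_sub_sub_cancel_left] at h
    nlinarith
  have hrec : ∀ x : ℝ, 0 < x → log (Gamma (x + 1)) = log x + log (Gamma x) := fun x hx => by
    rw [Gamma_add_one hx.ne', log_mul hx.ne' (Gamma_pos_of_pos hx).ne']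
  have hbound := log_three_halves_mul_lt_Gamma_sub_one hN
  rw [log_mul (by norm_num) (by linarith)] at hbound
  show log (Gamma t) - log (Gamma (N - t)) < log (Gamma s) - log (Gamma (N - s))
  nlinarith [hrec s hs0, hrec t ht0]

lemma exists_Gamma_eq_Gamma_sub (hN : 3 < N) : ∃ t ∈ Ioo 0 1, Gamma t = Gamma (N - t) := by
  have hGN : 1 ≤ Gamma N := one_le_Gamma (by linarith)
  set t₀ := (2 * Gamma N)⁻¹
  have ht₀ : 0 < t₀ := by positivity
  have ht₀1 : t₀ < 1 := inv_lt_one_of_one_lt₀ (by linarith)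
  have hleft : Gamma (N - t₀) < Gamma t₀ := calc
    Gamma (N - t₀) < Gamma N :=
      Gamma_strictMonoOn_Ici (mem_Ici.mpr (by linarith)) (mem_Ici.mpr (by linarith))
        (by linarith)
    _ = (2 * t₀)⁻¹ := by rw [mul_inv, inv_inv, ← mul_assoc, inv_mul_cancel₀ two_ne_zero, one_mul]
    _ ≤ Gamma t₀ := inv_two_mul_le_Gamma ht₀ ht₀1.le
  have hright : Gamma 1 < Gamma (N - 1) := by rw [Gamma_one]; exact one_lt_Gamma (by linarith)
  have hcont : ContinuousOn (fun t => Gamma t - Gamma (N - t)) (Icc t₀ 1) := by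
    refine (continuousOn_Gamma_Ioi.mono fun x hx => ?_).sub
      (continuousOn_Gamma_Ioi.comp (continuousOn_const.sub continuousOn_id) fun x hx => ?_)
    · exact ht₀.trans_le hx.1
    · exact mem_Ioi.mpr (by linarith [hx.2])
  obtain ⟨t, ht, hzero⟩ := intermediate_value_Ioo' ht₀1.le hcont
    ⟨sub_neg.mpr hright, sub_pos.mpr hleft⟩
  exact ⟨t, ⟨ht₀.trans ht.1, ht.2⟩, sub_eq_zero.mp hzero⟩

theorem existsUnique_Gamma_eq_Gamma_sub (hN : 4 ≤ N) :
    ∃! t, t ∈ Ioo 0 (N / 2) ∧ Gamma t = Gamma (N - t) := by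
  obtain ⟨t, ⟨ht0, ht1⟩, ht⟩ := exists_Gamma_eq_Gamma_sub (by linarith : 3 < N)
  have hsmall : ∀ s, s ∈ Ioo 0 (N / 2) → Gamma s = Gamma (N - s) → s ∈ Ioc 0 (Gamma (N - 1))⁻¹ :=
    fun s ⟨hs0, hsN⟩ hs => ⟨hs0, le_inv_Gamma_of_Gamma_eq_Gamma_sub (by linarith) hs0
      (lt_one_of_Gamma_eq_Gamma_sub hN hsN hs) hs⟩
  have hmem : t ∈ Ioo 0 (N / 2) := ⟨ht0, by linarith⟩
  refine ⟨t, ⟨hmem, ht⟩, fun s ⟨hs, hsΓ⟩ => ?_⟩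
  refine (strictAntiOn_log_Gamma_sub_log_Gamma_sub hN).injOn (hsmall s hs hsΓ) (hsmall t hmem ht) ?_
  simp only [hsΓ, ht, sub_self]

end

end Real

theorem tau_upper_star_well_defined (d : ℕ) (hd : 5 ≤ d) :
    (∃! t : ℝ, t ∈ Set.Ioo (0 : ℝ) (((d : ℝ) - 1) / 2) ∧
        Real.Gamma t = Real.Gamma ((d : ℝ) - 1 - t)) ∧
    (∃! τ : ℝ, τ ∈ Set.Ioo (1 : ℝ) (d : ℝ) ∧
        Real.Gamma (((d : ℝ) - τ) / 2) = Real.Gamma (((d : ℝ) + τ) / 2 - 1)) := by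
  have hunique := existsUnique_Gamma_eq_Gamma_sub (by
    have : (5 : ℝ) ≤ d := by exact_mod_cast hd
    linarith : (4 : ℝ) ≤ d - 1)
  refine ⟨hunique, ?_⟩
  have hbij : Function.Bijective fun t : ℝ => (d : ℝ) - 2 * t :=
    ⟨fun a b h => by simpa using h, fun τ => ⟨(d - τ) / 2, by ring⟩⟩
  rw [hbij.existsUnique_iff]
  refine (existsUnique_congr fun t => ?_).mp hunique
  rw [show ((d : ℝ) - ((d : ℝ) - 2 * t)) / 2 = t by ring,
    show ((d : ℝ) + ((d : ℝ) - 2 * t)) / 2 - 1 = d - 1 - t by ring]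
  simp only [mem_Ioo]
  constructor <;> rintro ⟨⟨h₁, h₂⟩, h⟩ <;> exact ⟨⟨by linarith, by linarith⟩, h⟩
end

section
/- Let d ∈ {2, 3} and τ ∈ (1, d) (for d = 2, τ ∈ (1,2); for d = 3, τ ∈ (1,3)), and define β_k = π·2^{2−τ}·Γ(τ−1)·Γ(k+(d−τ)/2) / (Γ(τ/2)^2·Γ(k+(d+τ)/2−1)) · (1+k(k+d−2))^{(τ−1)/2} for k ∈ ℕ. Then the sequence (β_k) is strictly decreasing. -/
/-!
Since `Γ(s + 1) = s Γ(s)`, the ratio `β (k + 1) / β k` equals `(u / v) (Q' / Q) ^ ((v - u) / 2)`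
with `u = k + (d - τ) / 2`, `v = k + (d + τ) / 2 - 1`, `Q = 1 + k (k + d - 2)` and `Q'` its value
at `k + 1`. The bounds `log y ≤ (y - y⁻¹) / 2` for `y ≥ 1` and `log (v / u) > 2 (v - u) / (u + v)`
reduce `(v - u) / 2 * log (Q' / Q) < log (v / u)` to the polynomial inequality
`(u + v) (Q'² - Q²) ≤ 8 Q Q'`, which holds for `d = 2, 3`.
-/

open Real

namespace Real

lemma log_le_sub_inv_div_two {y : ℝ} (hy : 1 ≤ y) : log y ≤ (y - y⁻¹) / 2 :=
  sinh_log (by linarith) ▸ self_le_sinh_iff.2 (log_nonneg hy)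

lemma two_mul_sub_div_add_lt_log_div {u v : ℝ} (hu : 0 < u) (huv : u < v) :
    2 * (v - u) / (u + v) < log (v / u) := by
  have h := lt_log_one_add_of_pos (div_pos (sub_pos.2 huv) hu)
  rwa [show 2 * ((v - u) / u) / ((v - u) / u + 2) = 2 * (v - u) / (u + v) by
      field_simp; ring, show 1 + (v - u) / u = v / u by field_simp; ring] at h

end Real

lemma mul_rpow_lt_mul_rpow_of_sq_sub_sq_le {u v Q Q' : ℝ} (hu : 0 < u) (huv : u < v)
    (hQ : 0 < Q) (hQQ' : Q ≤ Q') (h : (u + v) * (Q' ^ 2 - Q ^ 2) ≤ 8 * Q * Q') :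
    u * Q' ^ ((v - u) / 2) < v * Q ^ ((v - u) / 2) := by
  set p := (v - u) / 2
  have hQ' : 0 < Q' := hQ.trans_le hQQ'
  have hlog : p * log (Q' / Q) < log (v / u) := calc
    p * log (Q' / Q) ≤ p * ((Q' / Q - (Q' / Q)⁻¹) / 2) :=
      mul_le_mul_of_nonneg_left (log_le_sub_inv_div_two ((one_le_div hQ).2 hQQ'))
        (by positivity)
    _ = (v - u) * (Q' ^ 2 - Q ^ 2) / (4 * Q * Q') := by simp only [p]; field_simp; ring
    _ ≤ 2 * (v - u) / (u + v) := by
      rw [div_le_div_iff₀ (by positivity) (by linarith)]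
      nlinarith [mul_le_mul_of_nonneg_left h (sub_pos.2 huv).le]
    _ < log (v / u) := two_mul_sub_div_add_lt_log_div hu huv
  have hratio : (Q' / Q) ^ p < v / u := by
    rw [rpow_def_of_pos (div_pos hQ' hQ), ← exp_log (div_pos (hu.trans huv) hu)]
    exact exp_lt_exp.2 (by linarith)
  calc u * Q' ^ p = u * (Q' / Q) ^ p * Q ^ p := by
        rw [div_rpow hQ'.le hQ.le]; field_simp
    _ < u * (v / u) * Q ^ p := by gcongr
    _ = v * Q ^ p := by field_simp

theorem strictAnti_gamma_div_gamma_mul_rpow {a b : ℝ} {q : ℕ → ℝ} (ha : 0 < a) (hab : a < b)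
    (hq : ∀ k, 0 < q k) (hq_mono : Monotone q)
    (hstep : ∀ k : ℕ, (2 * k + a + b) * (q (k + 1) ^ 2 - q k ^ 2) ≤ 8 * q k * q (k + 1)) :
    StrictAnti fun k : ℕ => Gamma (k + a) / Gamma (k + b) * q k ^ ((b - a) / 2) := by
  refine strictAnti_nat_of_succ_lt fun k => ?_
  have hu : 0 < (k : ℝ) + a := by positivity
  have hv : 0 < (k : ℝ) + b := by linarith
  have key := mul_rpow_lt_mul_rpow_of_sq_sub_sq_le (v := k + b) hu (by linarith) (hq k)
    (hq_mono k.le_succ) (by convert hstep k using 2; ring)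
  rw [show (k : ℝ) + b - (k + a) = b - a by ring] at key
  push_cast
  rw [add_right_comm, Gamma_add_one hu.ne', add_right_comm, Gamma_add_one hv.ne']
  have hΓ : 0 < Gamma (k + a) / ((k + b) * Gamma (k + b)) :=
    div_pos (Gamma_pos_of_pos hu) (mul_pos hv (Gamma_pos_of_pos hv))
  calc (k + a) * Gamma (k + a) / ((k + b) * Gamma (k + b)) * q (k + 1) ^ ((b - a) / 2)
      = Gamma (k + a) / ((k + b) * Gamma (k + b)) * ((k + a) * q (k + 1) ^ ((b - a) / 2)) := by
        ring
    _ < Gamma (k + a) / ((k + b) * Gamma (k + b)) * ((k + b) * q k ^ ((b - a) / 2)) := by gcongr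
    _ = Gamma (k + a) / Gamma (k + b) * q k ^ ((b - a) / 2) := by field_simp

-- The right side exceeds the left by `2 x² + 2 x + 13` for `d = 2` and by `8` for `d = 3`.
lemma two_mul_add_sub_one_mul_sq_sub_sq_le {d : ℝ} (hd : d = 2 ∨ d = 3) (x : ℝ) :
    (2 * x + d - 1) * ((1 + (x + 1) * (x + 1 + d - 2)) ^ 2 - (1 + x * (x + d - 2)) ^ 2) ≤
      8 * (1 + x * (x + d - 2)) * (1 + (x + 1) * (x + 1 + d - 2)) := by
  rcases hd with rfl | rfl <;> nlinarith [sq_nonneg x, sq_nonneg (x + 1)]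

theorem beta_strictAnti_low_dim (d : ℕ) (hd : d = 2 ∨ d = 3) (τ : ℝ)
    (hτ : τ ∈ Set.Ioo (1 : ℝ) (d : ℝ)) :
    StrictAnti (fun k : ℕ =>
      π * 2 ^ (2 - τ) * Real.Gamma (τ - 1) * Real.Gamma ((k : ℝ) + ((d : ℝ) - τ) / 2) /
          (Real.Gamma (τ / 2) ^ 2 * Real.Gamma ((k : ℝ) + ((d : ℝ) + τ) / 2 - 1)) *
        (1 + (k : ℝ) * ((k : ℝ) + (d : ℝ) - 2)) ^ ((τ - 1) / 2)) := by
  obtain ⟨hτ1, hτd⟩ := hτ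
  have hd' : (d : ℝ) = 2 ∨ (d : ℝ) = 3 := by rcases hd with rfl | rfl <;> norm_num
  have hd2 : (2 : ℝ) ≤ d := by rcases hd' with h | h <;> linarith
  set q : ℕ → ℝ := fun k => 1 + (k : ℝ) * ((k : ℝ) + d - 2)
  have hq : ∀ k, 0 < q k := fun k => by
    have := mul_nonneg k.cast_nonneg (by linarith : (0 : ℝ) ≤ k + d - 2)
    simp only [q]; linarith
  have hq_mono : Monotone q := monotone_nat_of_le_succ fun k => by
    simp only [q]; push_cast; nlinarith [k.cast_nonneg (α := ℝ)]
  have hstep : ∀ k : ℕ, (2 * k + (d - τ) / 2 + ((d + τ) / 2 - 1)) * (q (k + 1) ^ 2 - q k ^ 2) ≤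
      8 * q k * q (k + 1) := fun k => by
    simp only [q]; push_cast
    convert two_mul_add_sub_one_mul_sq_sub_sq_le hd' k using 2; ring
  have hC : 0 < π * 2 ^ (2 - τ) * Gamma (τ - 1) / Gamma (τ / 2) ^ 2 := by
    have := Gamma_pos_of_pos (by linarith : 0 < τ - 1)
    have := Gamma_pos_of_pos (by linarith : 0 < τ / 2)
    positivity
  have key := (strictAnti_gamma_div_gamma_mul_rpow (by linarith) (by linarith) hq hq_mono
    hstep).const_mul hC
  rw [show ((d + τ) / 2 - 1 - (d - τ) / 2) / 2 = (τ - 1) / 2 by ring] at key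
  simp only [← add_sub_assoc] at key
  refine Eq.subst (motive := StrictAnti) (funext fun k => ?_) key
  ring
end

section
/- Let d ≥ 6 be an integer, set Θ(τ) = ((d+2−τ)/(d+τ))·((2d+1)/d)^{(τ−1)/2}, and let η(d) = d − 1 − sqrt(1+((d−4)/(d−3))(d^2−d+2)). Then for all 0 ≤ η ≤ η(d), Θ(d−η) > 1. -/
/-!
Writing `b = (2d + 1)/d`, the factor `b ^ (η / 2)` lost in the exponent when passing from `Θ(d)`
to `Θ(d - η)` is at most `1 + η (d + 1)/(2d)` by Bernoulli's inequality, and this is recovered by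
the growth of the prefactor from `2/(2d)` to `(2 + η)/(2d - η)`; hence `Θ(d - η) ≥ Θ(d)` for
`0 ≤ η ≤ 2`, and `η(d) ≤ 2`. Finally `Θ(d) = b ^ ((d - 1)/2) / d > 1` because
`b ^ d ≥ (3/2) 2 ^ d ≥ (8/3) d ^ 2 > b d ^ 2` for `d ≥ 6`.
-/

open Real

noncomputable def theta (d τ : ℝ) : ℝ :=
  (d + 2 - τ) / (d + τ) * ((2 * d + 1) / d) ^ ((τ - 1) / 2)

/-- The paper's `η(d)`. -/
noncomputable def etaMax (d : ℝ) : ℝ :=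
  d - 1 - √(1 + ((d - 4) / (d - 3)) * (d ^ 2 - d + 2))

lemma etaMax_le_two {d : ℝ} (hd : 4 ≤ d) : etaMax d ≤ 2 := by
  have hd3 : 0 < d - 3 := by linarith
  have hgap : 1 + ((d - 4) / (d - 3)) * (d ^ 2 - d + 2) - (d - 3) ^ 2
      = 4 * (d - 1) * (d - 4) / (d - 3) := by
    field_simp
    ring
  have hsq : (d - 3) ^ 2 ≤ 1 + ((d - 4) / (d - 3)) * (d ^ 2 - d + 2) := by
    have hgap_nonneg : 0 ≤ 4 * (d - 1) * (d - 4) / (d - 3) := by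
      apply div_nonneg _ hd3.le
      nlinarith
    linarith
  have hsqrt := le_sqrt_of_sq_le hsq
  unfold etaMax
  linarith

lemma theta_self_le_theta_sub {d η : ℝ} (hd : 1 < d) (hη0 : 0 ≤ η) (hη2 : η ≤ 2) :
    theta d d ≤ theta d (d - η) := by
  set b := (2 * d + 1) / d with hb
  have hd0 : 0 < d := by linarith
  have hb0 : 0 < b := by positivity
  have hb1 : b - 1 = (d + 1) / d := by rw [hb]; field_simp; ring
  have hbernoulli : b ^ (η / 2) ≤ 1 + η / 2 * ((d + 1) / d) := by
    have := rpow_one_add_le_one_add_mul_self (s := b - 1) (p := η / 2)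
      (by linarith) (by positivity) (by linarith)
    rwa [add_sub_cancel, hb1] at this
  have hprefactor :
      2 / (d + d) * (1 + η / 2 * ((d + 1) / d)) ≤ (d + 2 - (d - η)) / (d + (d - η)) := by
    rw [div_mul_eq_mul_div, div_le_div_iff₀ (by positivity) (by linarith)]
    field_simp
    nlinarith [mul_nonneg (sq_nonneg η) (by linarith : 0 ≤ d + 1)]
  have hsplit : b ^ ((d - 1) / 2) = b ^ (η / 2) * b ^ ((d - η - 1) / 2) := by
    rw [← rpow_add hb0]
    ring_nf
  calc theta d d = 2 / (d + d) * b ^ (η / 2) * b ^ ((d - η - 1) / 2) := by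
        rw [theta, hsplit, add_sub_cancel_left, mul_assoc]
    _ ≤ 2 / (d + d) * (1 + η / 2 * ((d + 1) / d)) * b ^ ((d - η - 1) / 2) := by gcongr
    _ ≤ theta d (d - η) := by unfold theta; gcongr

lemma sixteen_mul_sq_le_nine_mul_two_pow {n : ℕ} (hn : 6 ≤ n) : 16 * n ^ 2 ≤ 9 * 2 ^ n := by
  induction n, hn using Nat.le_induction with
  | base => norm_num
  | succ n hn ih =>
    have : (n + 1) ^ 2 ≤ 2 * n ^ 2 := by nlinarith
    rw [pow_succ 2 n]
    linarith

lemma three_halves_mul_two_pow_le {n : ℕ} (hn : n ≠ 0) :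
    3 / 2 * 2 ^ n ≤ ((2 * n + 1) / n : ℝ) ^ n := by
  have hn0 : (0 : ℝ) < n := by positivity
  have hfactor : ((2 * n + 1) / n : ℝ) = 2 * (1 + 1 / (2 * n)) := by field_simp
  have hinv : 0 ≤ 1 / (2 * (n : ℝ)) := by positivity
  have hbernoulli := one_add_mul_le_pow (a := 1 / (2 * (n : ℝ))) (by linarith) n
  rw [hfactor, mul_pow, mul_comm]
  gcongr
  convert hbernoulli using 1
  field_simp
  norm_num

lemma one_lt_theta_self {n : ℕ} (hn : 6 ≤ n) : 1 < theta n n := by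
  set b : ℝ := (2 * n + 1) / n with hb
  have hn0 : (0 : ℝ) < n := by positivity
  have hb0 : 0 < b := by positivity
  have hb13 : b ≤ 13 / 6 := by
    rw [hb, div_le_iff₀ hn0]
    linarith [show (6 : ℝ) ≤ n by exact_mod_cast hn]
  have hpow : b * n ^ 2 < b ^ n := by
    have h2 : (16 : ℝ) * n ^ 2 ≤ 9 * 2 ^ n := by
      exact_mod_cast sixteen_mul_sq_le_nine_mul_two_pow hn
    have h3 := three_halves_mul_two_pow_le (by omega : n ≠ 0)
    nlinarith [sq_nonneg (n : ℝ)]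
  have hsqrt : (n : ℝ) < b ^ (((n : ℝ) - 1) / 2) := by
    rw [div_eq_mul_one_div, rpow_mul hb0.le, ← sqrt_eq_rpow, rpow_sub_one hb0.ne', rpow_natCast,
      lt_sqrt hn0.le, lt_div_iff₀ hb0]
    linarith
  have htheta : theta n n = b ^ (((n : ℝ) - 1) / 2) / n := by
    rw [theta, ← hb, add_sub_cancel_left]
    field_simp
    ring
  rwa [htheta, one_lt_div hn0]

theorem theta_gt_one (d : ℕ) (hd : 6 ≤ d) (η : ℝ) (hη0 : 0 ≤ η)
    (hη : η ≤ (d : ℝ) - 1 -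
      Real.sqrt (1 + (((d : ℝ) - 4) / ((d : ℝ) - 3)) * ((d : ℝ) ^ 2 - (d : ℝ) + 2))) :
    ((d : ℝ) + 2 - ((d : ℝ) - η)) / ((d : ℝ) + ((d : ℝ) - η)) *
      ((2 * (d : ℝ) + 1) / (d : ℝ)) ^ (((d : ℝ) - η - 1) / 2) > 1 := by
  have hη2 : η ≤ 2 := hη.trans (etaMax_le_two (by exact_mod_cast (by omega : 4 ≤ d)))
  have hd1 : (1 : ℝ) < d := by exact_mod_cast (by omega : 1 < d)
  exact (one_lt_theta_self hd).trans_le (theta_self_le_theta_sub hd1 hη0 hη2)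
end

section
/- Let d = 5 and τ ∈ (τ_*, 5), where τ_* ∈ (1,5) satisfies 5^{(τ_*−1)/2}(5−τ_*)/2 = (3+τ_*)/2. Then the unique positive real k(τ) satisfying ((2k+5−τ)/(2k+3+τ))·((1+(k+1)(k+4))/(1+k(k+3)))^{(τ−1)/2} = 1 satisfies k(τ) ≤ −2 + sqrt((5−τ(2−τ))/((5−τ)(3+τ))); in particular k(τ) ≤ C_2/(5−τ)^{1/2} for some constant C_2 > 0. -/
open Real Filter Topology Set Polynomial

/-!
Write `h(k, τ)` for the displayed ratio and `k₀(τ) = -2 + √((5 - τ(2 - τ)) / ((5 - τ)(3 + τ)))`.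
With `u = (k + 2)²`, the derivative of `log h(·, τ)` has the sign of
`(5 - τ(2 - τ)) - u (5 - τ)(3 + τ)`, so `log h(·, τ)` is strictly decreasing on `[k₀, ∞)`.
Since `h(k, τ) → 1` as `k → ∞`, this forces `h > 1` on `(k₀, ∞)`, so every solution of
`h(k, τ) = 1` lies in `(0, k₀]`. Finally `k₀(τ) ≤ 3 / √(5 - τ)` on `(1, 5)`, because
`5 - τ(2 - τ) ≤ 9 (3 + τ)` there.
-/

theorem StrictAntiOn.lt_of_tendsto_atTop {α β : Type*} [LinearOrder α] [NoMaxOrder α]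
    [TopologicalSpace β] [Preorder β] [OrderClosedTopology β] {f : α → β} {a x : α} {l : β}
    (hf : StrictAntiOn f (Ici a)) (hlim : Tendsto f atTop (𝓝 l)) (hx : a ≤ x) : l < f x := by
  have : Nonempty α := ⟨a⟩
  obtain ⟨y, hxy⟩ := exists_gt x
  have hy : y ∈ Ici a := mem_Ici.2 (hx.trans hxy.le)
  calc l ≤ f y := le_of_tendsto hlim <| (eventually_ge_atTop y).mono fun z hz ↦
          hf.antitoneOn hy (mem_Ici.2 ((mem_Ici.1 hy).trans hz)) hz
    _ < f x := hf hx hy hxy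

theorem tendsto_log_sub_log_of_tendsto_div {α : Type*} {l : Filter α} {f g : α → ℝ}
    (h : Tendsto (fun x ↦ f x / g x) l (𝓝 1)) :
    Tendsto (fun x ↦ log (f x) - log (g x)) l (𝓝 0) := by
  have hlog := (continuousAt_log one_ne_zero).tendsto.comp h
  rw [log_one] at hlog
  refine hlog.congr' ?_
  filter_upwards [h.eventually_ne one_ne_zero] with x hx
  obtain ⟨hf, hg⟩ := div_ne_zero_iff.1 hx
  exact log_div hf hg

theorem tendsto_linear_div_linear_atTop {a : ℝ} (ha : a ≠ 0) (b c : ℝ) :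
    Tendsto (fun y ↦ (a * y + b) / (a * y + c)) atTop (𝓝 1) := by
  have h := div_tendsto_atTop_leadingCoeff_div_of_degree_eq (C a * X + C b) (C a * X + C c)
    (by rw [degree_linear ha, degree_linear ha])
  simpa only [eval_add, eval_mul, eval_C, eval_X, leadingCoeff_linear ha, div_self ha] using h

theorem tendsto_quadratic_div_quadratic_atTop {a : ℝ} (ha : a ≠ 0) (b c d e : ℝ) :
    Tendsto (fun y ↦ (a * y ^ 2 + b * y + c) / (a * y ^ 2 + d * y + e)) atTop (𝓝 1) := by
  have h := div_tendsto_atTop_leadingCoeff_div_of_degree_eq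
    (C a * X ^ 2 + C b * X + C c) (C a * X ^ 2 + C d * X + C e)
    (by rw [degree_quadratic ha, degree_quadratic ha])
  simpa only [eval_add, eval_mul, eval_pow, eval_C, eval_X, leadingCoeff_quadratic ha,
    div_self ha] using h

noncomputable def hRatio (τ k : ℝ) : ℝ :=
  (2 * k + 5 - τ) / (2 * k + 3 + τ) *
    ((1 + (k + 1) * (k + 4)) / (1 + k * (k + 3))) ^ ((τ - 1) / 2)

noncomputable def logHRatio (τ k : ℝ) : ℝ :=
  log (2 * k + 5 - τ) - log (2 * k + 3 + τ) +
    (τ - 1) / 2 * (log (k ^ 2 + 5 * k + 5) - log (k ^ 2 + 3 * k + 1))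

noncomputable def logHRatioDeriv (τ y : ℝ) : ℝ :=
  (τ - 1) * (4 / ((2 * y + 5 - τ) * (2 * y + 3 + τ)) -
    (y ^ 2 + 4 * y + 5) / ((y ^ 2 + 5 * y + 5) * (y ^ 2 + 3 * y + 1)))

/-- The positive zero of `∂h/∂k`. -/
noncomputable def hRatioCrit (τ : ℝ) : ℝ :=
  -2 + √((5 - τ * (2 - τ)) / ((5 - τ) * (3 + τ)))

section

variable {τ k y : ℝ}

theorem log_hRatio (hτ : τ ∈ Ioo 1 5) (hk : 0 < k) : log (hRatio τ k) = logHRatio τ k := by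
  obtain ⟨hτ1, hτ5⟩ := hτ
  have hL₁ : 0 < 2 * k + 5 - τ := by linarith
  have hL₂ : 0 < 2 * k + 3 + τ := by linarith
  have hQ₁ : 1 + (k + 1) * (k + 4) = k ^ 2 + 5 * k + 5 := by ring
  have hQ₂ : 1 + k * (k + 3) = k ^ 2 + 3 * k + 1 := by ring
  have hQ : 0 < (k ^ 2 + 5 * k + 5) / (k ^ 2 + 3 * k + 1) := by positivity
  rw [hRatio, hQ₁, hQ₂, log_mul (div_pos hL₁ hL₂).ne' (rpow_pos_of_pos hQ _).ne', log_rpow hQ,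
    log_div hL₁.ne' hL₂.ne', log_div (by positivity) (by positivity), logHRatio]

theorem hasDerivAt_logHRatio (hτ : τ ∈ Ioo 1 5) (hy : 0 < y) :
    HasDerivAt (logHRatio τ) (logHRatioDeriv τ y) y := by
  obtain ⟨hτ1, hτ5⟩ := hτ
  have hL₁ : 0 < 2 * y + 5 - τ := by linarith
  have hL₂ : 0 < 2 * y + 3 + τ := by linarith
  have hQ₁ : 0 < y ^ 2 + 5 * y + 5 := by positivity
  have hQ₂ : 0 < y ^ 2 + 3 * y + 1 := by positivity
  have hlin (c : ℝ) : HasDerivAt (fun y ↦ 2 * y + c) 2 y := by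
    simpa using ((hasDerivAt_id y).const_mul 2).add_const c
  have hquad (b c : ℝ) : HasDerivAt (fun y ↦ y ^ 2 + b * y + c) (2 * y + b) y := by
    simpa using ((hasDerivAt_pow 2 y).add ((hasDerivAt_id y).const_mul b)).add_const c
  have hL₁' : HasDerivAt (fun y ↦ 2 * y + 5 - τ) 2 y := by
    simpa only [add_sub_assoc] using hlin (5 - τ)
  have hL₂' : HasDerivAt (fun y ↦ 2 * y + 3 + τ) 2 y := by
    simpa only [add_assoc] using hlin (3 + τ)
  refine (((hL₁'.log hL₁.ne').sub (hL₂'.log hL₂.ne')).add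
    ((((hquad 5 5).log hQ₁.ne').sub ((hquad 3 1).log hQ₂.ne')).const_mul
      ((τ - 1) / 2))).congr_deriv ?_
  rw [logHRatioDeriv]
  field_simp
  ring

theorem logHRatio_deriv_neg (hτ : τ ∈ Ioo 1 5) (hy : 0 < y)
    (hcrit : 5 - τ * (2 - τ) < (y + 2) ^ 2 * ((5 - τ) * (3 + τ))) :
    logHRatioDeriv τ y < 0 := by
  obtain ⟨hτ1, hτ5⟩ := hτ
  have hL : 0 < (2 * y + 5 - τ) * (2 * y + 3 + τ) := mul_pos (by linarith) (by linarith)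
  have key : (y ^ 2 + 4 * y + 5) * ((2 * y + 5 - τ) * (2 * y + 3 + τ)) -
      4 * ((y ^ 2 + 5 * y + 5) * (y ^ 2 + 3 * y + 1)) =
      (y + 2) ^ 2 * ((5 - τ) * (3 + τ)) - (5 - τ * (2 - τ)) := by ring
  rw [logHRatioDeriv]
  refine mul_neg_of_pos_of_neg (by linarith) ?_
  rw [sub_neg, div_lt_div_iff₀ hL (by positivity)]
  linarith

theorem lt_sq_mul_of_hRatioCrit_lt (hτ : τ ∈ Ioo 1 5) (hy : hRatioCrit τ < y) :
    5 - τ * (2 - τ) < (y + 2) ^ 2 * ((5 - τ) * (3 + τ)) := by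
  obtain ⟨hτ1, hτ5⟩ := hτ
  have hsqrt : √((5 - τ * (2 - τ)) / ((5 - τ) * (3 + τ))) < y + 2 := by
    rw [hRatioCrit] at hy
    linarith
  have hpos : 0 < y + 2 := (sqrt_nonneg _).trans_lt hsqrt
  rw [sqrt_lt' hpos, div_lt_iff₀ (by nlinarith)] at hsqrt
  exact hsqrt

theorem strictAntiOn_logHRatio (hτ : τ ∈ Ioo 1 5) (hk : 0 < k) (hcrit : hRatioCrit τ < k) :
    StrictAntiOn (logHRatio τ) (Ici k) := by
  refine strictAntiOn_of_hasDerivWithinAt_neg (convex_Ici k) (f' := logHRatioDeriv τ)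
    (fun y hy ↦ (hasDerivAt_logHRatio hτ (hk.trans_le hy)).continuousAt.continuousWithinAt)
    (fun y hy ↦ ?_) (fun y hy ↦ ?_) <;> rw [interior_Ici] at hy
  · exact (hasDerivAt_logHRatio hτ (hk.trans hy)).hasDerivWithinAt
  · exact logHRatio_deriv_neg hτ (hk.trans hy) (lt_sq_mul_of_hRatioCrit_lt hτ (hcrit.trans hy))

theorem tendsto_logHRatio_atTop (τ : ℝ) : Tendsto (logHRatio τ) atTop (𝓝 0) := by
  have hlin := tendsto_log_sub_log_of_tendsto_div
    (tendsto_linear_div_linear_atTop two_ne_zero (5 - τ) (3 + τ))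
  have hquad := tendsto_log_sub_log_of_tendsto_div
    (tendsto_quadratic_div_quadratic_atTop one_ne_zero 5 5 3 1)
  have h := hlin.add (hquad.const_mul ((τ - 1) / 2))
  rw [mul_zero, add_zero] at h
  refine h.congr fun y ↦ ?_
  simp only [logHRatio, one_mul]
  ring_nf

theorem le_hRatioCrit_of_hRatio_eq_one (hτ : τ ∈ Ioo 1 5) (hk : 0 < k) (h : hRatio τ k = 1) :
    k ≤ hRatioCrit τ := by
  by_contra! hcrit
  have hpos : 0 < logHRatio τ k :=
    (strictAntiOn_logHRatio hτ hk hcrit).lt_of_tendsto_atTop (tendsto_logHRatio_atTop τ) le_rfl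
  rw [← log_hRatio hτ hk, h, log_one] at hpos
  exact hpos.false

theorem hRatioCrit_le (hτ : τ ∈ Ioo 1 5) : hRatioCrit τ ≤ 3 / (5 - τ) ^ ((1 : ℝ) / 2) := by
  obtain ⟨hτ1, hτ5⟩ := hτ
  have h5 : 0 < 5 - τ := by linarith
  calc hRatioCrit τ ≤ √((5 - τ * (2 - τ)) / ((5 - τ) * (3 + τ))) := by
        rw [hRatioCrit]; linarith
    _ ≤ √(3 ^ 2 / (5 - τ)) := by
        refine sqrt_le_sqrt ?_
        rw [div_le_div_iff₀ (by nlinarith) h5]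
        have : 0 ≤ (5 - τ) * (22 + 11 * τ - τ ^ 2) := mul_nonneg h5.le (by nlinarith)
        linear_combination this
    _ = 3 / (5 - τ) ^ ((1 : ℝ) / 2) := by
        rw [sqrt_div' _ h5.le, sqrt_sq zero_le_three, sqrt_eq_rpow]

end

theorem k_tau_upper_bound_general (τstar : ℝ) (hτstar : τstar ∈ Set.Ioo (1 : ℝ) 5) :
    (∀ τ ∈ Set.Ioo τstar (5 : ℝ), ∀ k : ℝ, 0 < k →
        (2 * k + 5 - τ) / (2 * k + 3 + τ) *
            ((1 + (k + 1) * (k + 4)) / (1 + k * (k + 3))) ^ ((τ - 1) / 2) = 1 →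
        k ≤ -2 + Real.sqrt ((5 - τ * (2 - τ)) / ((5 - τ) * (3 + τ)))) ∧
    ∃ C₂ : ℝ, 0 < C₂ ∧ ∀ τ ∈ Set.Ioo τstar (5 : ℝ), ∀ k : ℝ, 0 < k →
        (2 * k + 5 - τ) / (2 * k + 3 + τ) *
            ((1 + (k + 1) * (k + 4)) / (1 + k * (k + 3))) ^ ((τ - 1) / 2) = 1 →
        k ≤ C₂ / (5 - τ) ^ ((1 : ℝ) / 2) := by
  have mem_Ioo_one_five {τ : ℝ} (hτ : τ ∈ Ioo τstar 5) : τ ∈ Ioo 1 5 :=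
    ⟨hτstar.1.trans hτ.1, hτ.2⟩
  exact ⟨fun τ hτ k hk h ↦ le_hRatioCrit_of_hRatio_eq_one (mem_Ioo_one_five hτ) hk h, 3, three_pos,
    fun τ hτ k hk h ↦ (le_hRatioCrit_of_hRatio_eq_one (mem_Ioo_one_five hτ) hk h).trans
      (hRatioCrit_le (mem_Ioo_one_five hτ))⟩

theorem k_tau_upper_bound (τstar : ℝ) (hτstar : τstar ∈ Set.Ioo (1 : ℝ) 5)
    (hτstareq : (5 : ℝ) ^ ((τstar - 1) / 2) * ((5 - τstar) / 2) = (3 + τstar) / 2) :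
    (∀ τ ∈ Set.Ioo τstar (5 : ℝ), ∀ k : ℝ, 0 < k →
        (2 * k + 5 - τ) / (2 * k + 3 + τ) *
            ((1 + (k + 1) * (k + 4)) / (1 + k * (k + 3))) ^ ((τ - 1) / 2) = 1 →
        k ≤ -2 + Real.sqrt ((5 - τ * (2 - τ)) / ((5 - τ) * (3 + τ)))) ∧
    ∃ C₂ : ℝ, 0 < C₂ ∧ ∀ τ ∈ Set.Ioo τstar (5 : ℝ), ∀ k : ℝ, 0 < k →
        (2 * k + 5 - τ) / (2 * k + 3 + τ) *
            ((1 + (k + 1) * (k + 4)) / (1 + k * (k + 3))) ^ ((τ - 1) / 2) = 1 →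
        k ≤ C₂ / (5 - τ) ^ ((1 : ℝ) / 2) :=
  k_tau_upper_bound_general τstar hτstar
end

section
/- Let d = 5 and 0 < ε < 1. For every k ∈ ℕ, h(k, 5−2ε) ≤ h(k,5) + ε·(2(k+2)/(k+3)^2)·((k^2+5k+5)/(k^2+3k+1))^2, where h(k,τ) = ((2k+5−τ)/(2k+3+τ))·((1+(k+1)(k+4))/(1+k(k+3)))^{(τ−1)/2}. -/
/-! With `R = (k²+5k+5)/(k²+3k+1) ≥ 1` and `τ = 5 - 2ε`, we have `h(k, τ) = (k+ε)/(k+4-ε) · R^(2-ε)`.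
Since `R ≥ 1`, the power is at most `R²`, and the prefactor exceeds its value `k/(k+4)` at `ε = 0` by
`2ε(k+2)/((k+4-ε)(k+4)) ≤ 2ε(k+2)/(k+3)²`. -/

open Real

lemma one_le_div_quadratic {x : ℝ} (hx : 0 ≤ x) :
    1 ≤ (x ^ 2 + 5 * x + 5) / (x ^ 2 + 3 * x + 1) := by
  rw [one_le_div (by positivity)]
  linarith

lemma add_div_sub_le_div_add {x ε : ℝ} (hx : 0 ≤ x) (hε0 : 0 ≤ ε) (hε1 : ε ≤ 1) :
    (x + ε) / (x + 4 - ε) ≤ x / (x + 4) + ε * (2 * (x + 2) / (x + 3) ^ 2) := by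
  have hgap : (x + ε) / (x + 4 - ε) - x / (x + 4) = ε * (2 * (x + 2) / ((x + 4 - ε) * (x + 4))) := by
    field_simp [show x + 4 - ε ≠ 0 by linarith, show x + 4 ≠ 0 by linarith]
    ring
  have hden : (x + 3) ^ 2 ≤ (x + 4 - ε) * (x + 4) := by nlinarith
  have hgap_le : 2 * (x + 2) / ((x + 4 - ε) * (x + 4)) ≤ 2 * (x + 2) / (x + 3) ^ 2 :=
    div_le_div_of_nonneg_left (by positivity) (by positivity) hden
  linarith [mul_le_mul_of_nonneg_left hgap_le hε0]

theorem h_mean_value_bound :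
    ∀ k : ℕ, ∀ ε : ℝ, 0 < ε → ε < 1 →
      (2 * (k : ℝ) + 5 - (5 - 2 * ε)) / (2 * (k : ℝ) + 3 + (5 - 2 * ε)) *
          ((1 + ((k : ℝ) + 1) * ((k : ℝ) + 4)) / (1 + (k : ℝ) * ((k : ℝ) + 3))) ^
            (((5 - 2 * ε) - 1) / 2) ≤
        (2 * (k : ℝ) + 5 - 5) / (2 * (k : ℝ) + 3 + 5) *
            ((1 + ((k : ℝ) + 1) * ((k : ℝ) + 4)) / (1 + (k : ℝ) * ((k : ℝ) + 3))) ^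
              (((5 : ℝ) - 1) / 2) +
          ε * (2 * ((k : ℝ) + 2) / ((k : ℝ) + 3) ^ 2) *
            (((k : ℝ) ^ 2 + 5 * (k : ℝ) + 5) / ((k : ℝ) ^ 2 + 3 * (k : ℝ) + 1)) ^ 2 := by
  intro k ε hε0 hε1
  set x : ℝ := (k : ℝ)
  have hx : 0 ≤ x := Nat.cast_nonneg k
  set R := (x ^ 2 + 5 * x + 5) / (x ^ 2 + 3 * x + 1)
  have hR : (1 + (x + 1) * (x + 4)) / (1 + x * (x + 3)) = R := by congr 1 <;> ring
  have hpre : (2 * x + 5 - (5 - 2 * ε)) / (2 * x + 3 + (5 - 2 * ε)) = (x + ε) / (x + 4 - ε) := by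
    rw [show 2 * x + 5 - (5 - 2 * ε) = 2 * (x + ε) by ring,
      show 2 * x + 3 + (5 - 2 * ε) = 2 * (x + 4 - ε) by ring, mul_div_mul_left _ _ two_ne_zero]
  have hpre₀ : (2 * x + 5 - 5) / (2 * x + 3 + 5) = x / (x + 4) := by
    rw [show 2 * x + 5 - 5 = 2 * x by ring, show 2 * x + 3 + 5 = 2 * (x + 4) by ring,
      mul_div_mul_left _ _ two_ne_zero]
  rw [hR, hpre, hpre₀, show ((5 - 2 * ε) - 1) / 2 = 2 - ε by ring,
    show ((5 : ℝ) - 1) / 2 = 2 by norm_num, rpow_two]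
  have hR1 : 1 ≤ R := one_le_div_quadratic hx
  calc (x + ε) / (x + 4 - ε) * R ^ (2 - ε)
      ≤ (x + ε) / (x + 4 - ε) * R ^ (2 : ℝ) := by
        gcongr
        · exact div_nonneg (by linarith) (by linarith)
        · linarith
    _ ≤ (x / (x + 4) + ε * (2 * (x + 2) / (x + 3) ^ 2)) * R ^ 2 := by
        rw [rpow_two]
        gcongr
        exact add_div_sub_le_div_add hx hε0.le hε1.le
    _ = x / (x + 4) * R ^ 2 + ε * (2 * (x + 2) / (x + 3) ^ 2) * R ^ 2 := add_mul _ _ _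
end

section
/- Let d ≥ 2, τ ∈ (1,d), and define, for θ(ρ) = ρ^{(τ−1)/4}, β_k = π·2^{2−τ}·Γ(τ−1)·Γ(k+(d−τ)/2)/(Γ(τ/2)^2·Γ(k+(d+τ)/2−1))·(k(k+d−2))^{(τ−1)/2}. Then (β_k)_{k∈ℕ} is strictly increasing with β_0 = 0 and lim_{k→∞} β_k = π·2^{2−τ}·Γ(τ−1)/Γ(τ/2)^2; in particular sup_k β_k = π·2^{2−τ}·Γ(τ−1)/Γ(τ/2)^2 is not attained. -/
/-!
Write `β_k = C · r(k)` with `r(y) = Γ(y + (d-τ)/2) / Γ(y + (d+τ)/2 - 1) · (y(y+d-2))^((τ-1)/2)`.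
The increment `G(y) = log r(y+1) - log r(y)` is a combination of differences
`log (y + a) - log (y + b)`, so `G → 0`, and `G' = -(τ-1)(B₀ + B₁y + B₂y²) / (8 · positive)` with
`B₀ ≥ 0` and `B₂ = 2(3(d-2)² + (2-τ)τ) > 0` (here the integrality of `d` matters). Hence `G`
decreases to `0`, so `G > 0` and `r` is strictly increasing. Finally `r(y) → 1` by Wendel's limit
`Γ(x + s) / (Γ(x) x^s) → 1`, which follows from the log-convexity of `Γ`.
-/

open Real Filter Topology Set

namespace Real

theorem tendsto_log_add_sub_log_add (c c' : ℝ) :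
    Tendsto (fun x : ℝ => log (x + c) - log (x + c')) atTop (𝓝 0) := by
  simpa using (tendsto_log_comp_add_sub_log c).sub (tendsto_log_comp_add_sub_log c')

theorem log_Gamma_add_one {x : ℝ} (hx : 0 < x) :
    log (Gamma (x + 1)) = log (Gamma x) + log x := by
  rw [Gamma_add_one hx.ne', log_mul hx.ne' (Gamma_pos_of_pos hx).ne', add_comm]

theorem log_Gamma_add_le {x s : ℝ} (hx : 0 < x) (hs₀ : 0 ≤ s) (hs₁ : s ≤ 1) :
    log (Gamma (x + s)) ≤ log (Gamma x) + s * log x := by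
  have h := convexOn_log_Gamma.2 (mem_Ioi.2 hx) (mem_Ioi.2 (by linarith : 0 < x + 1))
    (sub_nonneg.2 hs₁) hs₀ (by ring)
  simp only [smul_eq_mul, Function.comp_apply, log_Gamma_add_one hx] at h
  rw [show (1 - s) * x + s * (x + 1) = x + s by ring] at h
  linarith

theorem log_Gamma_add_ge {x s : ℝ} (hx : 0 < x) (hs₀ : 0 ≤ s) (hs₁ : s ≤ 1) :
    log (Gamma x) + log x - (1 - s) * log (x + s) ≤ log (Gamma (x + s)) := by
  have hxs : 0 < x + s := by linarith
  have h := convexOn_log_Gamma.2 (mem_Ioi.2 hxs) (mem_Ioi.2 (by linarith : 0 < x + s + 1))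
    hs₀ (sub_nonneg.2 hs₁) (by ring)
  simp only [smul_eq_mul, Function.comp_apply, log_Gamma_add_one hxs] at h
  rw [show s * (x + s) + (1 - s) * (x + s + 1) = x + 1 by ring, log_Gamma_add_one hx] at h
  linarith

theorem tendsto_log_Gamma_add_sub_log_Gamma_sub_mul_log_of_le_one {s : ℝ} (hs₀ : 0 ≤ s)
    (hs₁ : s ≤ 1) :
    Tendsto (fun x => log (Gamma (x + s)) - log (Gamma x) - s * log x) atTop (𝓝 0) := by
  have hlow := (tendsto_log_add_sub_log_add s 0).const_mul (-(1 - s))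
  simp only [add_zero, mul_zero] at hlow
  refine tendsto_of_tendsto_of_tendsto_of_le_of_le' hlow tendsto_const_nhds ?_ ?_
  all_goals filter_upwards [eventually_gt_atTop 0] with x hx
  · linarith [log_Gamma_add_ge hx hs₀ hs₁]
  · linarith [log_Gamma_add_le hx hs₀ hs₁]

theorem tendsto_log_Gamma_add_sub_log_Gamma_sub_mul_log {s : ℝ} (hs : 0 ≤ s) :
    Tendsto (fun x => log (Gamma (x + s)) - log (Gamma x) - s * log x) atTop (𝓝 0) := by
  obtain ⟨n, hn⟩ := exists_nat_ge s
  induction n generalizing s with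
  | zero =>
    exact tendsto_log_Gamma_add_sub_log_Gamma_sub_mul_log_of_le_one hs
      (by push_cast at hn; linarith)
  | succ n ih =>
    rcases le_or_gt s 1 with hs₁ | hs₁
    · exact tendsto_log_Gamma_add_sub_log_Gamma_sub_mul_log_of_le_one hs hs₁
    · have h := (ih (s := s - 1) (by linarith) (by push_cast at hn; linarith)).add
        (tendsto_log_add_sub_log_add (s - 1) 0)
      rw [add_zero] at h
      refine h.congr' ?_
      filter_upwards [eventually_gt_atTop 0] with x hx
      rw [show x + s = x + (s - 1) + 1 by ring, log_Gamma_add_one (by linarith), add_zero]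
      ring

end Real

theorem StrictAntiOn.pos_of_tendsto_zero {f : ℝ → ℝ} {a : ℝ} (hf : StrictAntiOn f (Ioi a))
    (hlim : Tendsto f atTop (𝓝 0)) {x : ℝ} (hx : a < x) : 0 < f x := by
  have hx1 : a < x + 1 := by linarith
  have hnonneg : 0 ≤ f (x + 1) := le_of_tendsto hlim <| by
    filter_upwards [eventually_ge_atTop (x + 1)] with y hy
    exact hf.antitoneOn hx1 (hx1.trans_le hy) hy
  exact hnonneg.trans_lt (hf hx hx1 (lt_add_one x))

noncomputable def gammaRatio (d : ℕ) (τ y : ℝ) : ℝ :=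
  Gamma (y + (d - τ) / 2) / Gamma (y + (d + τ) / 2 - 1) * (y * (y + d - 2)) ^ ((τ - 1) / 2)

noncomputable def logIncrement (d : ℕ) (τ y : ℝ) : ℝ :=
  log (y + (d - τ) / 2) - log (y + (d + τ) / 2 - 1)
    + (τ - 1) / 2 * (log (y + 1) + log (y + d - 1) - log y - log (y + d - 2))

section

variable {d : ℕ} {τ : ℝ}

theorem gammaRatio_zero (hτ : 1 < τ) : gammaRatio d τ 0 = 0 := by
  rw [gammaRatio, zero_mul, zero_rpow (by linarith), mul_zero]

theorem tendsto_logIncrement : Tendsto (logIncrement d τ) atTop (𝓝 0) := by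
  have h := (tendsto_log_add_sub_log_add ((d - τ) / 2) ((d + τ) / 2 - 1)).add
    (((tendsto_log_add_sub_log_add 1 0).add
      (tendsto_log_add_sub_log_add (d - 1) (d - 2))).const_mul ((τ - 1) / 2))
  simp only [add_zero, mul_zero] at h
  refine h.congr fun y => ?_
  simp only [logIncrement]
  ring_nf

variable (hd : 2 ≤ d) (hτ₁ : 1 < τ) (hτd : τ < d)
include hd hτ₁ hτd

theorem gammaRatio_pos {y : ℝ} (hy : 0 < y) : 0 < gammaRatio d τ y := by
  have hd' : (2 : ℝ) ≤ d := by exact_mod_cast hd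
  unfold gammaRatio
  have h₁ : 0 < Gamma (y + (d - τ) / 2) := Gamma_pos_of_pos (by linarith)
  have h₂ : 0 < Gamma (y + (d + τ) / 2 - 1) := Gamma_pos_of_pos (by linarith)
  have h₃ : 0 < y * (y + d - 2) := mul_pos hy (by linarith)
  positivity

theorem log_gammaRatio {y : ℝ} (hy : 0 < y) :
    log (gammaRatio d τ y) = log (Gamma (y + (d - τ) / 2)) - log (Gamma (y + (d + τ) / 2 - 1))
      + (τ - 1) / 2 * (log y + log (y + d - 2)) := by
  have hd' : (2 : ℝ) ≤ d := by exact_mod_cast hd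
  have h₁ : 0 < Gamma (y + (d - τ) / 2) := Gamma_pos_of_pos (by linarith)
  have h₂ : 0 < Gamma (y + (d + τ) / 2 - 1) := Gamma_pos_of_pos (by linarith)
  have h₃ : 0 < y + d - 2 := by linarith
  rw [gammaRatio, log_mul (by positivity) (by positivity), log_div h₁.ne' h₂.ne',
    log_rpow (by positivity), log_mul hy.ne' h₃.ne']

theorem log_gammaRatio_add_one {y : ℝ} (hy : 0 < y) :
    log (gammaRatio d τ (y + 1)) = log (gammaRatio d τ y) + logIncrement d τ y := by
  have hd' : (2 : ℝ) ≤ d := by exact_mod_cast hd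
  rw [log_gammaRatio hd hτ₁ hτd hy, log_gammaRatio hd hτ₁ hτd (by linarith), logIncrement,
    show y + 1 + (d - τ) / 2 = y + (d - τ) / 2 + 1 by ring,
    show y + 1 + (d + τ) / 2 - 1 = y + (d + τ) / 2 - 1 + 1 by ring,
    show y + 1 + d - 2 = y + d - 1 by ring,
    log_Gamma_add_one (by linarith), log_Gamma_add_one (by linarith)]
  ring

theorem hasDerivAt_logIncrement {y : ℝ} (hy : 0 < y) :
    HasDerivAt (logIncrement d τ)
      (-(τ - 1) * ((d - 1) * (d - 2) * (d - 2 + τ) * (d - τ)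
          + 2 * (3 * (d - 2) ^ 2 + (2 - τ) * τ) * y * (y + d - 1)) /
        (8 * ((y + (d - τ) / 2) * (y + (d + τ) / 2 - 1) * (y * (y + 1)) *
          ((y + d - 2) * (y + d - 1))))) y := by
  have hd' : (2 : ℝ) ≤ d := by exact_mod_cast hd
  have hA : y + (d - τ) / 2 ≠ 0 := by linarith
  have hB : y + ((d + τ) / 2 - 1) ≠ 0 := by linarith
  have h₁ : y + 1 ≠ 0 := by linarith
  have h₂ : y + (d - 1) ≠ 0 := by linarith
  have h₃ : y + (d - 2) ≠ 0 := by linarith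
  have hlog : ∀ c : ℝ, y + c ≠ 0 → HasDerivAt (fun z => log (z + c)) (1 / (y + c)) y :=
    fun c hc => by simpa using ((hasDerivAt_id y).add_const c).log hc
  have h := ((hlog _ hA).sub (hlog _ hB)).add
    ((((hlog _ h₁).add (hlog _ h₂)).sub (hasDerivAt_log hy.ne')).sub (hlog _ h₃)
      |>.const_mul ((τ - 1) / 2))
  refine (h.congr_of_eventuallyEq (.of_forall fun z => ?_)).congr_deriv ?_
  · simp only [logIncrement, Pi.add_apply, Pi.sub_apply]
    ring_nf
  · simp only [← add_sub_assoc] at hB h₂ h₃ ⊢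
    have hA2 : y * 2 + (d - τ) ≠ 0 := by linarith
    have hB2 : y * 2 + (d + τ) - 2 ≠ 0 := by linarith
    field_simp
    ring

theorem logIncrement_strictAntiOn : StrictAntiOn (logIncrement d τ) (Ioi 0) := by
  have hd' : (2 : ℝ) ≤ d := by exact_mod_cast hd
  have hM : 0 < 3 * ((d : ℝ) - 2) ^ 2 + (2 - τ) * τ := by
    rcases hd.eq_or_lt with rfl | hd3
    · have : τ < 2 := by exact_mod_cast hτd
      nlinarith
    · have hd3' : (3 : ℝ) ≤ d := by exact_mod_cast hd3
      nlinarith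
  refine strictAntiOn_of_deriv_neg (convex_Ioi 0)
    (fun y hy => (hasDerivAt_logIncrement hd hτ₁ hτd hy).continuousAt.continuousWithinAt)
    fun y hy => ?_
  rw [interior_Ioi] at hy
  have hy : 0 < y := hy
  rw [(hasDerivAt_logIncrement hd hτ₁ hτd hy).deriv, neg_mul, neg_div, neg_lt_zero]
  have h₀ : 0 ≤ ((d : ℝ) - 1) * (d - 2) * (d - 2 + τ) * (d - τ) := by
    have : (0 : ℝ) < d - 1 := by linarith
    have : (0 : ℝ) ≤ d - 2 := by linarith
    have : (0 : ℝ) < d - τ := by linarith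
    have : (0 : ℝ) < d - 2 + τ := by linarith
    positivity
  have : 0 < y + (d - τ) / 2 := by linarith
  have : 0 < y + (d + τ) / 2 - 1 := by linarith
  have : 0 < y + d - 1 := by linarith
  have : 0 < y + d - 2 := by linarith
  have : 0 < τ - 1 := by linarith
  positivity

theorem logIncrement_pos {y : ℝ} (hy : 0 < y) : 0 < logIncrement d τ y :=
  (logIncrement_strictAntiOn hd hτ₁ hτd).pos_of_tendsto_zero tendsto_logIncrement hy

theorem gammaRatio_lt_gammaRatio_add_one {y : ℝ} (hy : 0 < y) :
    gammaRatio d τ y < gammaRatio d τ (y + 1) := by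
  have hlog := log_gammaRatio_add_one hd hτ₁ hτd hy
  rw [← log_lt_log_iff (gammaRatio_pos hd hτ₁ hτd hy) (gammaRatio_pos hd hτ₁ hτd (by linarith)),
    hlog]
  linarith [logIncrement_pos hd hτ₁ hτd hy]

theorem strictMono_gammaRatio_natCast : StrictMono fun k : ℕ => gammaRatio d τ k := by
  refine strictMono_nat_of_lt_succ fun k => ?_
  rcases k.eq_zero_or_pos with rfl | hk
  · simpa [gammaRatio_zero hτ₁] using gammaRatio_pos hd hτ₁ hτd one_pos
  · exact_mod_cast gammaRatio_lt_gammaRatio_add_one hd hτ₁ hτd (Nat.cast_pos.2 hk)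

theorem tendsto_gammaRatio : Tendsto (gammaRatio d τ) atTop (𝓝 1) := by
  have hW := (tendsto_log_Gamma_add_sub_log_Gamma_sub_mul_log (s := τ - 1) (by linarith)).comp
    (tendsto_atTop_add_const_right _ ((d - τ) / 2) tendsto_id)
  have hlog := (hW.neg.add (((tendsto_log_add_sub_log_add 0 ((d - τ) / 2)).add
    (tendsto_log_add_sub_log_add (d - 2) ((d - τ) / 2))).const_mul ((τ - 1) / 2)))
  simp only [neg_zero, add_zero, mul_zero] at hlog
  rw [← exp_zero]
  refine (continuous_exp.tendsto 0).comp hlog |>.congr' ?_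
  filter_upwards [eventually_gt_atTop 0] with y hy
  rw [Function.comp_apply, ← exp_log (gammaRatio_pos hd hτ₁ hτd hy), log_gammaRatio hd hτ₁ hτd hy,
    show y + (d + τ) / 2 - 1 = y + (d - τ) / 2 + (τ - 1) by ring]
  simp only [Function.comp_apply, id]
  ring_nf

end

theorem beta_homogeneous_theta (d : ℕ) (hd : 2 ≤ d) (τ : ℝ) (hτ : τ ∈ Set.Ioo (1 : ℝ) (d : ℝ)) :
    let β : ℕ → ℝ := fun k =>
      π * 2 ^ (2 - τ) * Real.Gamma (τ - 1) * Real.Gamma ((k : ℝ) + ((d : ℝ) - τ) / 2) /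
          (Real.Gamma (τ / 2) ^ 2 * Real.Gamma ((k : ℝ) + ((d : ℝ) + τ) / 2 - 1)) *
        ((k : ℝ) * ((k : ℝ) + (d : ℝ) - 2)) ^ ((τ - 1) / 2)
    StrictMono β ∧ β 0 = 0 ∧
      Tendsto β atTop (nhds (π * 2 ^ (2 - τ) * Real.Gamma (τ - 1) / Real.Gamma (τ / 2) ^ 2)) ∧
      (∀ k : ℕ, β k < π * 2 ^ (2 - τ) * Real.Gamma (τ - 1) / Real.Gamma (τ / 2) ^ 2) ∧
      (⨆ k : ℕ, β k) = π * 2 ^ (2 - τ) * Real.Gamma (τ - 1) / Real.Gamma (τ / 2) ^ 2 := by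
  intro β
  obtain ⟨hτ₁, hτd⟩ := hτ
  set C := π * 2 ^ (2 - τ) * Gamma (τ - 1) / Gamma (τ / 2) ^ 2
  have hC : 0 < C := by
    have := Gamma_pos_of_pos (by linarith : 0 < τ - 1)
    have := Gamma_pos_of_pos (by linarith : 0 < τ / 2)
    have := pi_pos
    positivity
  have hβ : β = fun k : ℕ => C * gammaRatio d τ k := funext fun k => by
    simp only [β, C, gammaRatio]
    ring
  have hmono : StrictMono β := hβ ▸ (strictMono_gammaRatio_natCast hd hτ₁ hτd).const_mul hC
  have hlim : Tendsto β atTop (𝓝 C) := by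
    simpa [hβ] using ((tendsto_gammaRatio hd hτ₁ hτd).comp tendsto_natCast_atTop_atTop).const_mul C
  refine ⟨hmono, by simp [hβ, gammaRatio_zero hτ₁], hlim, fun k => ?_,
    (isLUB_of_tendsto_atTop hmono.monotone hlim).ciSup_eq⟩
  exact (hmono k.lt_succ_self).trans_le (hmono.monotone.ge_of_tendsto hlim _)
end
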